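/- Define φ : ℕ × ℕ → ℕ by φ(n, l) = g(n+1, l+1), where g is as above. Then φ(n, l) ≤ l for all n, l; φ(n, 0) = 0 and φ(n, 1) = 1; the sequence l ↦ φ(n, l) is non-decreasing and bounded above; and its limit θ(n) = lim_{l→∞} φ(n, l) equals f(n+1). -/

import Mathlib

/-- An equation from `E_n`: `x_k = 1`, `x_i + x_j = x_k`, or `x_i * x_j = x_k`. -/
inductive Eqn (n : ℕ) : Type where
  | one (k : Fin n)
  | add (i j k : Fin n)
  | mul (i j k : Fin n)

def Eqn.holds {n : ℕ} (x : Fin n → ℕ) : Eqn n → Prop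
  | .one k => x k = 1
  | .add i j k => x i + x j = x k
  | .mul i j k => x i * x j = x k

/-- `x` solves the system `S ⊆ E_n`. -/
def Solves {n : ℕ} (x : Fin n → ℕ) (S : Set (Eqn n)) : Prop :=
  ∀ e ∈ S, e.holds x

/-- Every solvable system `S ⊆ E_n` has a solution with all values `≤ b`. -/
def IsBound (n b : ℕ) : Prop :=
  ∀ S : Set (Eqn n), (∃ x, Solves x S) → ∃ x, Solves x S ∧ ∀ i, x i ≤ b

/-- `f n` is the smallest such bound. -/
noncomputable def f (n : ℕ) : ℕ := sInf {b | IsBound n b}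

/-- `y` is a duplicate of `x`. -/
def Dup {n : ℕ} (x y : Fin n → ℕ) : Prop :=
  (∀ k, x k = 1 → y k = 1) ∧
  (∀ i j k, x i + x j = x k → y i + y j = y k) ∧
  (∀ i j k, x i * x j = x k → y i * y j = y k)

/-- Every `x : ℕⁿ` has a duplicate in `{0,…,b}ⁿ`. -/
def DupBound (n b : ℕ) : Prop :=
  ∀ x : Fin n → ℕ, ∃ y, Dup x y ∧ ∀ i, y i ≤ b

/-- `f` expressed via duplicates. -/
noncomputable def fdup (n : ℕ) : ℕ := sInf {b | DupBound n b}

/-- `g n m` : smallest `b` such that every `x ∈ {0,…,m-1}ⁿ` has a duplicate in `{0,…,b}ⁿ`. -/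
noncomputable def g (n m : ℕ) : ℕ :=
  sInf {b | ∀ x : Fin n → ℕ, (∀ i, x i < m) → ∃ y, Dup x y ∧ ∀ i, y i ≤ b}

noncomputable def φ (n l : ℕ) : ℕ := g (n + 1) (l + 1)

/-! `Dup x y` says exactly that `y` satisfies every equation of `E_n` that `x` satisfies. Since
`E_n` is finite, only finitely many systems arise as the equations satisfied by some `x`;
choosing one solution of each yields a uniform bound, so `fdup n` is attained. The sets defining
`g n m` shrink as `m` grows and all contain `fdup n`, so `g n` is monotone and bounded by `fdup n`.
Conversely, a tuple `x` witnessing that `fdup n - 1` is not a bound forces `g n m ≥ fdup n` as soon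
as `m` exceeds the entries of `x`, so `g n` is eventually constant equal to `fdup n`. -/

open Filter

instance {n : ℕ} : Finite (Eqn n) := by
  refine Finite.of_injective (β := Fin n ⊕ (Fin n × Fin n × Fin n) ⊕ (Fin n × Fin n × Fin n))
    (fun e : Eqn n => match e with
      | .one k => .inl k
      | .add i j k => .inr (.inl (i, j, k))
      | .mul i j k => .inr (.inr (i, j, k))) ?_
  intro a b hab
  cases a <;> cases b <;> simp_all

def eqnsOf {n : ℕ} (x : Fin n → ℕ) : Set (Eqn n) := {e | e.holds x}

lemma dup_iff_eqnsOf_subset {n : ℕ} {x y : Fin n → ℕ} : Dup x y ↔ eqnsOf x ⊆ eqnsOf y := by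
  constructor
  · rintro ⟨h_one, h_add, h_mul⟩ e he
    cases e with
    | one k => exact h_one k he
    | add i j k => exact h_add i j k he
    | mul i j k => exact h_mul i j k he
  · intro h
    exact ⟨fun k => @h (.one k), fun i j k => @h (.add i j k), fun i j k => @h (.mul i j k)⟩

lemma Dup.refl {n : ℕ} (x : Fin n → ℕ) : Dup x x :=
  dup_iff_eqnsOf_subset.2 subset_rfl

lemma exists_dupBound (n : ℕ) : ∃ b, DupBound n b := by
  choose r hr using fun S : Set.range (eqnsOf (n := n)) => S.2
  obtain ⟨b, hb⟩ :=
    (Set.finite_range fun p : Set.range (eqnsOf (n := n)) × Fin n => r p.1 p.2).bddAbove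
  refine ⟨b, fun x => ⟨r ⟨eqnsOf x, x, rfl⟩, ?_, fun i => hb ⟨(_, i), rfl⟩⟩⟩
  exact dup_iff_eqnsOf_subset.2 (hr ⟨eqnsOf x, x, rfl⟩).ge

lemma dupBound_fdup (n : ℕ) : DupBound n (fdup n) :=
  Nat.sInf_mem (exists_dupBound n)

lemma g_le_fdup (n m : ℕ) : g n m ≤ fdup n :=
  Nat.sInf_le fun x _ => dupBound_fdup n x

lemma exists_dup_le_g {n m : ℕ} {x : Fin n → ℕ} (hx : ∀ i, x i < m) :
    ∃ y, Dup x y ∧ ∀ i, y i ≤ g n m :=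
  Nat.sInf_mem (s := {b | ∀ x : Fin n → ℕ, (∀ i, x i < m) → ∃ y, Dup x y ∧ ∀ i, y i ≤ b})
    ⟨fdup n, fun x _ => dupBound_fdup n x⟩ x hx

lemma lt_g_of_forall_dup {n m b : ℕ} {x : Fin n → ℕ} (hx : ∀ i, x i < m)
    (h : ∀ y, Dup x y → ∃ i, b < y i) : b < g n m := by
  obtain ⟨y, hy, hyg⟩ := exists_dup_le_g hx
  obtain ⟨i, hi⟩ := h y hy
  exact hi.trans_le (hyg i)

lemma g_succ_le (n l : ℕ) : g n (l + 1) ≤ l :=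
  Nat.sInf_le fun x hx => ⟨x, Dup.refl x, fun i => Nat.lt_succ_iff.1 (hx i)⟩

lemma one_le_g {n m : ℕ} (hn : 0 < n) (hm : 2 ≤ m) : 1 ≤ g n m :=
  lt_g_of_forall_dup (x := fun _ => 1) (fun _ => hm)
    fun _ hy => ⟨⟨0, hn⟩, (hy.1 ⟨0, hn⟩ rfl).ge⟩

lemma g_mono (n : ℕ) : Monotone (g n) := fun _ _ hmm' =>
  Nat.sInf_le fun _ hx => exists_dup_le_g fun i => (hx i).trans_le hmm'

lemma eventually_fdup_le_g (n : ℕ) : ∀ᶠ m in atTop, fdup n ≤ g n m := by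
  rcases Nat.eq_zero_or_pos (fdup n) with h0 | hpos
  · simp [h0]
  have hnot : ¬DupBound n (fdup n - 1) := Nat.notMem_of_lt_sInf (Nat.sub_lt hpos one_pos)
  simp only [DupBound, not_forall, not_exists, not_and] at hnot
  obtain ⟨x, hx⟩ := hnot
  filter_upwards [eventually_gt_atTop (Finset.univ.sup x)] with m hm
  have := lt_g_of_forall_dup (b := fdup n - 1)
    (fun i => (Finset.le_sup (Finset.mem_univ i)).trans_lt hm)
    fun y hy => by simpa using hx y hy
  omega

lemma tendsto_g_atTop (n : ℕ) : Tendsto (g n) atTop (nhds (fdup n)) :=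
  tendsto_nhds_of_eventually_eq <| (eventually_fdup_le_g n).mono fun m hm =>
    (g_le_fdup n m).antisymm hm

theorem stmt16 (n : ℕ) :
    (∀ l, φ n l ≤ l) ∧ φ n 0 = 0 ∧ φ n 1 = 1 ∧
    Monotone (φ n) ∧ (∃ B, ∀ l, φ n l ≤ B) ∧
    Filter.Tendsto (φ n) Filter.atTop (nhds (fdup (n + 1))) :=
  ⟨g_succ_le _, Nat.le_zero.1 (g_succ_le _ 0),
    (g_succ_le _ 1).antisymm (one_le_g n.succ_pos le_rfl),
    (g_mono _).comp fun _ _ h => Nat.succ_le_succ h,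
    ⟨fdup (n + 1), fun _ => g_le_fdup _ _⟩,
    (tendsto_g_atTop _).comp (tendsto_add_atTop_nat 1)⟩
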